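/- arXiv:1008.1829 — 7 statements merged into one kernel-verified Lean document; each statement's English description precedes it below -/
import Mathlib

section
/- (Vandermonde-type identity for modified binomial coefficients) For integers A, B, m with A + B ≥ 0: Σ_{w ∈ ℤ} [A; w]·[B; m−w] = [A+B; m], where [·;·] is the modified binomial coefficient (the sum has finitely many nonzero terms). -/
/-- The modified binomial coefficient `[A; B]` of Lee. -/
def mbinom (A B : ℤ) : ℚ :=
  if B < A then ∏ i ∈ Finset.range (A - B).toNat, (((A : ℚ) - i) / (((A : ℚ) - (B : ℚ)) - i))
  else if A = B then 1 else 0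

lemma desc_smeval_eq_prod (n : ℕ) (r : ℚ) :
    (descPochhammer ℤ n).smeval r = ∏ i ∈ Finset.range n, (r - i) := by
  induction n with
  | zero => simp
  | succ n ih =>
    rw [descPochhammer_succ_right, Polynomial.smeval_mul, ih, Finset.prod_range_succ]
    congr 1
    rw [Polynomial.smeval_sub, Polynomial.smeval_X, Polynomial.smeval_natCast]
    simp

lemma choose_eq_prod_div (r : ℚ) (n : ℕ) :
    Ring.choose r n = (∏ i ∈ Finset.range n, (r - i)) / n.factorial := by
  have h := Ring.descPochhammer_eq_factorial_smul_choose r n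
  rw [desc_smeval_eq_prod, nsmul_eq_mul] at h
  rw [h, mul_div_cancel_left₀]
  exact_mod_cast n.factorial_ne_zero

lemma prod_sub_eq_factorial (n : ℕ) :
    ∏ i ∈ Finset.range n, ((n : ℚ) - i) = n.factorial := by
  have h1 : ∀ i ∈ Finset.range n, ((n : ℚ) - i) = ((n - i : ℕ) : ℚ) := by
    intro i hi
    rw [Nat.cast_sub (le_of_lt (Finset.mem_range.mp hi))]
  rw [Finset.prod_congr rfl h1, ← Nat.cast_prod]
  congr 1
  have := Finset.prod_range_reflect (fun j => j + 1) n
  rw [← Finset.prod_range_add_one_eq_factorial, ← this]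
  refine Finset.prod_congr rfl fun i hi => ?_
  have := Finset.mem_range.mp hi
  omega

lemma mbinom_eq_choose {A B : ℤ} (h : B ≤ A) :
    mbinom A B = Ring.choose (A : ℚ) (A - B).toNat := by
  rcases eq_or_lt_of_le h with he | hl
  · subst he
    simp [mbinom]
  · have hn : ((A : ℚ) - (B : ℚ)) = ((A - B).toNat : ℚ) := by
      have h0 : ((A - B : ℤ) : ℚ) = ((A - B).toNat : ℚ) := by
        exact_mod_cast congrArg (fun z : ℤ => (z : ℚ)) (Int.toNat_of_nonneg (by omega : (0:ℤ) ≤ A - B)).symm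
      rw [← h0]
      push_cast
      ring
    rw [mbinom, if_pos hl, choose_eq_prod_div, hn]
    rw [Finset.prod_div_distrib, prod_sub_eq_factorial]

lemma mbinom_eq_zero {A B : ℤ} (h : A < B) : mbinom A B = 0 := by
  rw [mbinom, if_neg (by omega), if_neg (by omega)]

theorem stmt_8 (A B m : ℤ) (h : 0 ≤ A + B) :
    ∑ᶠ w : ℤ, mbinom A w * mbinom B (m - w) = mbinom (A + B) m := by
  have hsupp : (Function.support fun w => mbinom A w * mbinom B (m - w)) ⊆
      ↑(Finset.Icc (m - B) A) := by
    intro w hw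
    simp only [Function.mem_support, ne_eq] at hw
    simp only [Finset.coe_Icc, Set.mem_Icc]
    constructor
    · by_contra hc
      exact hw (by rw [mbinom_eq_zero (by omega : B < m - w), mul_zero])
    · by_contra hc
      exact hw (by rw [mbinom_eq_zero (by omega : A < w), zero_mul])
  rw [finsum_eq_sum_of_support_subset _ hsupp]
  by_cases hm : A + B < m
  · rw [mbinom_eq_zero hm]
    rw [Finset.Icc_eq_empty (by omega), Finset.sum_empty]
  · push_neg at hm
    set N := (A + B - m).toNat with hN
    rw [mbinom_eq_choose hm]
    have hAB : ((A + B : ℤ) : ℚ) = (A : ℚ) + (B : ℚ) := by push_cast; ring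
    rw [hAB, Ring.add_choose_eq N (Commute.all _ _),
      Finset.Nat.sum_antidiagonal_eq_sum_range_succ_mk]
    refine Finset.sum_bij' (fun w _ => (A - w).toNat) (fun k _ => A - k) ?_ ?_ ?_ ?_ ?_
    · intro w hw
      simp only [Finset.mem_Icc] at hw
      simp only [Finset.mem_range]
      omega
    · intro k hk
      simp only [Finset.mem_range] at hk
      simp only [Finset.mem_Icc]
      omega
    · intro w hw
      simp only [Finset.mem_Icc] at hw
      omega
    · intro k hk
      simp only [Finset.mem_range] at hk
      omega
    · intro w hw
      simp only [Finset.mem_Icc] at hw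
      dsimp only
      rw [mbinom_eq_choose hw.2, mbinom_eq_choose (by omega : m - w ≤ B)]
      congr 2
      omega
end

section
/- For the cluster algebra A(c,c) with c ≥ 2 and cluster variables x_n defined by x_{n+1} = (x_n^c + 1)/x_{n−1}, and the sequence a_1 = 0, a_2 = 1, a_n = c·a_{n-1} − a_{n-2}: for each n ≥ 3, x_n · x_1^{a_{n-1}} · x_2^{a_{n-2}} is a polynomial in x_1^c and x_2^c with integer coefficients. -/
/-!
With `y k = x (k + 3) * x₁ ^ a (k + 2) * x₂ ^ a (k + 1)`, the exchange relation
`x (k + 3) * x (k + 5) = x (k + 4) ^ c + 1` becomes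
`y k * y (k + 2) = y (k + 1) ^ c + (x₁ ^ a (k + 3) * x₂ ^ a (k + 2)) ^ c`, because `a` obeys
`a (k + 1) + a (k + 3) = c * a (k + 2)`. The last term is a monomial `M (k + 1)` in `x₁ ^ c, x₂ ^ c`
with nonnegative exponents, so it suffices to find integer polynomials `P k` with
`P k * P (k + 2) = P (k + 1) ^ c + M (k + 1)`. This is the Laurent-phenomenon induction: one
carries `P (k + 1) ∣ P k ^ c + M k` and `P k ∣ P (k + 1) ^ c + M (k + 1)`, together with `P k`
having constant term `1`, which makes it coprime to every `M j`; the identity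
`M (k + 1) ^ c = M (k + 2) * M k` then propagates the divisibilities. Substituting
`x₁ ^ c, x₂ ^ c` is injective, so no `y k` vanishes and `y k = P k (x₁ ^ c, x₂ ^ c)` follows.
-/

open MvPolynomial

section Exchange

variable {R : Type*} [CommRing R] [DecompositionMonoid R] {c : ℕ}

theorem dvd_pow_add_of_mul_eq_pow_add (hc : c ≠ 0) {t u v m₀ m₁ m₂ : R}
    (hum₁ : IsRelPrime u m₁) (htv : t * v = u ^ c + m₁) (hut : u ∣ t ^ c + m₀)
    (hm : m₁ ^ c = m₂ * m₀) : u ∣ v ^ c + m₂ := by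
  have hu_pow : u ∣ (t * v) ^ c - m₁ ^ c := by
    refine (dvd_pow_self u hc).trans ((dvd_of_eq ?_).trans (sub_dvd_pow_sub_pow _ _ c))
    rw [htv, add_sub_cancel_right]
  have hcop : IsRelPrime u t := fun d hdu hdt ↦ hum₁ hdu <| by
    have h := dvd_sub (hdt.mul_right v) (dvd_pow hdu hc)
    rwa [htv, add_sub_cancel_left] at h
  have key : t ^ c * (v ^ c + m₂) = ((t * v) ^ c - m₁ ^ c) + m₂ * (t ^ c + m₀) := by
    linear_combination hm
  have hdvd : u ∣ t ^ c * (v ^ c + m₂) := key ▸ dvd_add hu_pow (hut.mul_left m₂)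
  exact hcop.pow_right.dvd_of_dvd_mul_left hdvd

theorem exists_eq_apply_of_exchange_recurrence {S K F : Type*} [Semiring S] [Nontrivial S]
    [CommRing K] [IsDomain K] [FunLike F R K] [RingHomClass F R K]
    (hc : c ≠ 0) (φ : R →+* S) (Y : F) (hY : Function.Injective Y)
    {M : ℕ → R} (hM : ∀ k, M (k + 1) ^ c = M (k + 2) * M k) (hMφ : ∀ k, φ (M k) = 0)
    (hcop : ∀ p, φ p = 1 → ∀ k, IsRelPrime p (M k))
    {P₀ P₁ : R} (h₀ : φ P₀ = 1) (h₁ : φ P₁ = 1) (hP₁ : P₁ ∣ P₀ ^ c + M 0)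
    (hP₀ : P₀ ∣ P₁ ^ c + M 1) {y : ℕ → K} (hy₀ : y 0 = Y P₀) (hy₁ : y 1 = Y P₁)
    (hy : ∀ k, y k ≠ 0 → y k * y (k + 2) = y (k + 1) ^ c + Y (M (k + 1))) :
    ∀ k, ∃ p, y k = Y p := by
  suffices h : ∀ k, ∃ t u, φ t = 1 ∧ φ u = 1 ∧ u ∣ t ^ c + M k ∧ t ∣ u ^ c + M (k + 1) ∧
      y k = Y t ∧ y (k + 1) = Y u from
    fun k ↦ (h k).imp fun t ⟨_, _, _, _, _, hyt, _⟩ ↦ hyt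
  intro k
  induction k with
  | zero => exact ⟨P₀, P₁, h₀, h₁, hP₁, hP₀, hy₀, hy₁⟩
  | succ k ih =>
    obtain ⟨t, u, ht, hu, hut, ⟨v, htv⟩, hyt, hyu⟩ := ih
    have hYt : Y t ≠ 0 := (map_ne_zero_iff Y hY).2 fun h ↦ by simp [h] at ht
    refine ⟨u, v, hu, ?_, Dvd.intro_left t htv.symm,
      dvd_pow_add_of_mul_eq_pow_add hc (hcop u hu _) htv.symm hut (hM k), hyu, ?_⟩
    · simpa [ht, hu, hMφ] using (congrArg φ htv).symm
    · refine mul_left_cancel₀ hYt ?_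
      rw [← hyt, hy k (hyt ▸ hYt), hyu, ← map_pow, ← map_add, htv, map_mul, hyt]

end Exchange

theorem strictMono_of_rec {c : ℤ} (hc : 2 ≤ c) {a : ℕ → ℤ} (h₀ : a 0 = 0) (h₁ : a 1 = 1)
    (h : ∀ k, a (k + 2) = c * a (k + 1) - a k) : StrictMono a := by
  suffices ∀ k, 0 ≤ a k ∧ a k < a (k + 1) from strictMono_nat_of_lt_succ fun k ↦ (this k).2
  intro k
  induction k with
  | zero => simp [h₀, h₁]
  | succ k ih =>
    refine ⟨ih.1.trans ih.2.le, ?_⟩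
    rw [h]
    nlinarith

theorem exists_nat_eq_of_rec {c : ℕ} (hc : 2 ≤ c) {a : ℕ → ℤ} (h₀ : a 0 = 0) (h₁ : a 1 = 1)
    (h : ∀ k, a (k + 2) = c * a (k + 1) - a k) :
    ∃ e : ℕ → ℕ, (∀ k, (e k : ℤ) = a k) ∧ StrictMono e ∧ ∀ k, e (k + 2) + e k = c * e (k + 1) := by
  have hmono := strictMono_of_rec (by exact_mod_cast hc) h₀ h₁ h
  obtain ⟨e, he⟩ : ∃ e : ℕ → ℕ, ∀ k, (e k : ℤ) = a k :=
    ⟨fun k ↦ (a k).toNat, fun k ↦ Int.toNat_of_nonneg (h₀ ▸ hmono.monotone k.zero_le)⟩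
  refine ⟨e, he, fun i j hij ↦ ?_, fun k ↦ ?_⟩
  · have := hmono hij
    rw [← he, ← he] at this
    exact_mod_cast this
  · zify
    rw [he, he, he, h]
    ring

theorem isRelPrime_X_of_constantCoeff_ne_zero {σ R : Type*} [CommRing R] [IsDomain R]
    {p : MvPolynomial σ R} (hp : constantCoeff p ≠ 0) (i : σ) : IsRelPrime p (X i) :=
  (X_prime.irreducible.isRelPrime_iff_not_dvd.2 fun ⟨q, hq⟩ ↦ hp (by simp [hq])).symm

section CoeffMonomial

variable {R : Type*} [CommRing R] {c : ℕ} {e : ℕ → ℕ}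

noncomputable def coeffMonomial (e : ℕ → ℕ) (k : ℕ) : MvPolynomial (Fin 2) R :=
  X 0 ^ e (k + 1) * X 1 ^ e k

theorem coeffMonomial_pow (he : ∀ k, e (k + 2) + e k = c * e (k + 1)) (k : ℕ) :
    (coeffMonomial e (k + 1) : MvPolynomial (Fin 2) R) ^ c =
      coeffMonomial e (k + 2) * coeffMonomial e k := by
  simp only [coeffMonomial]
  rw [mul_pow, ← pow_mul, ← pow_mul, mul_comm (e _), mul_comm (e _), ← he, ← he]
  ring

theorem constantCoeff_coeffMonomial (he : ∀ k, e (k + 1) ≠ 0) (k : ℕ) :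
    constantCoeff (coeffMonomial e k : MvPolynomial (Fin 2) R) = 0 := by
  simp [coeffMonomial, he]

theorem isRelPrime_coeffMonomial [IsDomain R] [UniqueFactorizationMonoid R]
    {p : MvPolynomial (Fin 2) R} (hp : constantCoeff p ≠ 0) (k : ℕ) :
    IsRelPrime p (coeffMonomial e k) :=
  have h := isRelPrime_X_of_constantCoeff_ne_zero hp
  (h 0).pow_right.mul_right (h 1).pow_right

theorem X_add_one_dvd (hc : c ≠ 0) :
    (X 1 + 1 : MvPolynomial (Fin 2) R) ∣ ((X 1 + 1) ^ c + X 0) ^ c + X 0 ^ c * X 1 := by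
  have h := sub_dvd_pow_sub_pow ((X 1 + 1 : MvPolynomial (Fin 2) R) ^ c + X 0) (X 0) c
  rw [add_sub_cancel_right] at h
  convert dvd_add ((dvd_pow_self _ hc).trans h) (dvd_mul_left (X 1 + 1) (X 0 ^ c)) using 1
  ring

theorem exists_eq_apply_of_rank_two_exchange [IsDomain R] [UniqueFactorizationMonoid R]
    {K F : Type*} [CommRing K] [IsDomain K] [FunLike F (MvPolynomial (Fin 2) R) K]
    [RingHomClass F (MvPolynomial (Fin 2) R) K] (hc : c ≠ 0) (he₀ : e 0 = 0) (he₁ : e 1 = 1)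
    (he_mono : StrictMono e) (he : ∀ k, e (k + 2) + e k = c * e (k + 1)) (Y : F)
    (hY : Function.Injective Y) {y : ℕ → K} (hy₀ : y 0 = Y (X 1) + 1)
    (hy₁ : y 1 = (Y (X 1) + 1) ^ c + Y (X 0))
    (hy : ∀ k, y k ≠ 0 → y k * y (k + 2) = y (k + 1) ^ c + Y (coeffMonomial e (k + 1))) :
    ∀ k, ∃ p, y k = Y p := by
  have he₂ : e 2 = c := by simpa [he₀, he₁] using he 0
  refine exists_eq_apply_of_exchange_recurrence hc constantCoeff Y hY (coeffMonomial_pow he)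
    (constantCoeff_coeffMonomial fun k ↦ (he₀ ▸ he_mono k.succ_pos).ne')
    (fun p hp ↦ isRelPrime_coeffMonomial (hp ▸ one_ne_zero)) (P₀ := X 1 + 1)
    (P₁ := (X 1 + 1) ^ c + X 0) (by simp) (by simp) (by simp [coeffMonomial, he₀, he₁]) ?_
    (by simpa using hy₀) (by simpa using hy₁) hy
  simpa [coeffMonomial, he₁, he₂] using X_add_one_dvd hc

end CoeffMonomial

theorem injective_aeval_X_pow {σ R S K : Type*} [CommRing R] [CommRing S] [Algebra R S]
    (hRS : Function.Injective (algebraMap R S)) [CommRing K] [Algebra R K]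
    [Algebra (MvPolynomial σ S) K] [IsScalarTower R (MvPolynomial σ S) K]
    [IsFractionRing (MvPolynomial σ S) K] {c : ℕ} (hc : 0 < c) :
    Function.Injective
      (aeval fun i ↦ algebraMap (MvPolynomial σ S) K (X i) ^ c : MvPolynomial σ R →ₐ[R] K) := by
  have h : (aeval fun i ↦ algebraMap (MvPolynomial σ S) K (X i) ^ c).toRingHom =
      (algebraMap (MvPolynomial σ S) K).comp
        ((map (algebraMap R S)).comp (expand c).toRingHom) := by
    ext
    · simp [IsScalarTower.algebraMap_apply R (MvPolynomial σ S) K, MvPolynomial.algebraMap_apply]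
    · simp
  have hinj : Function.Injective ((algebraMap (MvPolynomial σ S) K).comp
      ((map (algebraMap R S)).comp (expand c).toRingHom)) :=
    (IsFractionRing.injective _ K).comp ((map_injective _ hRS).comp (expand_injective hc))
  rwa [← h] at hinj

theorem zpow_mul_zpow_mul_eq_pow {G : Type*} [CommGroupWithZero G] {x₁ x₂ : G} (h₁ : x₁ ≠ 0)
    (h₂ : x₂ ≠ 0) {c : ℕ} {p q r s : ℤ} (hs : q + s = c * r) (hr : p + r = c * q) :
    x₁ ^ q * x₂ ^ p * (x₁ ^ s * x₂ ^ r) = (x₁ ^ r * x₂ ^ q) ^ c := by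
  rw [mul_pow, ← zpow_natCast, ← zpow_natCast, ← zpow_mul, ← zpow_mul, mul_comm r, mul_comm q,
    ← hs, ← hr, zpow_add₀ h₁, zpow_add₀ h₂]
  exact mul_mul_mul_comm _ _ _ _

section Rescaled

variable {K : Type*} [Field K] {c : ℕ} {a : ℕ → ℤ} {x : ℕ → K}

def rescaled (x : ℕ → K) (a : ℕ → ℤ) (k : ℕ) : K := x (k + 3) * x 1 ^ a (k + 2) * x 2 ^ a (k + 1)

theorem rescaled_mul_rescaled (hx₁ : x 1 ≠ 0) (hx₂ : x 2 ≠ 0)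
    (hx : ∀ m, x (m + 3) = (x (m + 2) ^ c + 1) / x (m + 1))
    (ha : ∀ k, a (k + 3) = c * a (k + 2) - a (k + 1)) {k : ℕ} (hk : rescaled x a k ≠ 0) :
    rescaled x a k * rescaled x a (k + 2) =
      rescaled x a (k + 1) ^ c + (x 1 ^ a (k + 3) * x 2 ^ a (k + 2)) ^ c := by
  have hxk : x (k + 3) ≠ 0 := fun h ↦ hk (by simp [rescaled, h])
  have hexch : x (k + 3) * x (k + 5) = x (k + 4) ^ c + 1 := by
    rw [hx (k + 2), mul_div_cancel₀ _ hxk]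
  have hmon := zpow_mul_zpow_mul_eq_pow hx₁ hx₂ (c := c) (p := a (k + 1)) (q := a (k + 2))
    (r := a (k + 3)) (s := a (k + 4)) (by linarith [ha (k + 1)]) (by linarith [ha k])
  simp only [rescaled]
  linear_combination (x 1 ^ a (k + 2) * x 2 ^ a (k + 1) * (x 1 ^ a (k + 4) * x 2 ^ a (k + 3))) *
    hexch + (x (k + 4) ^ c + 1) * hmon

theorem rescaled_zero (hx₁ : x 1 ≠ 0) (hx : ∀ m, x (m + 3) = (x (m + 2) ^ c + 1) / x (m + 1))
    (ha₁ : a 1 = 0) (ha₂ : a 2 = 1) : rescaled x a 0 = x 2 ^ c + 1 := by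
  simp [rescaled, ha₁, ha₂, hx 0, div_mul_cancel₀ _ hx₁]

theorem rescaled_one (hx₁ : x 1 ≠ 0) (hx₂ : x 2 ≠ 0)
    (hx : ∀ m, x (m + 3) = (x (m + 2) ^ c + 1) / x (m + 1))
    (ha : ∀ k, a (k + 3) = c * a (k + 2) - a (k + 1)) (ha₁ : a 1 = 0) (ha₂ : a 2 = 1) :
    rescaled x a 1 = (x 2 ^ c + 1) ^ c + x 1 ^ c := by
  have h₃ : x 3 * x 1 = x 2 ^ c + 1 := by rw [hx 0, div_mul_cancel₀ _ hx₁]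
  simp only [rescaled, ha 0, ha₁, ha₂, hx 1, Nat.reduceAdd, mul_one, sub_zero, zpow_natCast,
    zpow_one]
  rw [← h₃]
  field_simp
  ring

end Rescaled

theorem stmt_11 (c : ℕ) (hc : 2 ≤ c) (a : ℕ → ℤ) (ha1 : a 1 = 0) (ha2 : a 2 = 1)
    (harec : ∀ n : ℕ, 3 ≤ n → a n = (c : ℤ) * a (n - 1) - a (n - 2))
    (x : ℕ → FractionRing (MvPolynomial (Fin 2) ℚ))
    (hx1 : x 1 = algebraMap (MvPolynomial (Fin 2) ℚ) _ (X 0))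
    (hx2 : x 2 = algebraMap (MvPolynomial (Fin 2) ℚ) _ (X 1))
    (hrec : ∀ n : ℕ, 2 ≤ n → x (n + 1) = (x n ^ c + 1) / x (n - 1)) :
    ∀ n : ℕ, 3 ≤ n → ∃ P : MvPolynomial (Fin 2) ℤ,
      x n * x 1 ^ (a (n - 1)) * x 2 ^ (a (n - 2)) = MvPolynomial.aeval ![x 1 ^ c, x 2 ^ c] P := by
  have hc₀ : c ≠ 0 := by omega
  have ha : ∀ k, a (k + 3) = c * a (k + 2) - a (k + 1) := fun k ↦ by
    simpa using harec (k + 3) (by omega)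
  have hx : ∀ m, x (m + 3) = (x (m + 2) ^ c + 1) / x (m + 1) := fun m ↦ by
    simpa using hrec (m + 2) (by omega)
  obtain ⟨e, he, he_mono, he_rec⟩ := exists_nat_eq_of_rec hc (a := fun k ↦ a (k + 1)) ha1 ha2 ha
  have hx₁ : x 1 ≠ 0 := by
    rw [hx1]; exact (map_ne_zero_iff _ (IsFractionRing.injective _ _)).2 (X_ne_zero _)
  have hx₂ : x 2 ≠ 0 := by
    rw [hx2]; exact (map_ne_zero_iff _ (IsFractionRing.injective _ _)).2 (X_ne_zero _)
  set Y : MvPolynomial (Fin 2) ℤ →ₐ[ℤ] FractionRing (MvPolynomial (Fin 2) ℚ) :=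
    aeval ![x 1 ^ c, x 2 ^ c] with hY_def
  have hY : Function.Injective Y := by
    have hvec : ![x 1 ^ c, x 2 ^ c] = fun i ↦ algebraMap (MvPolynomial (Fin 2) ℚ) _ (X i) ^ c := by
      ext i; fin_cases i <;> simp [hx1, hx2]
    rw [hY_def, hvec]
    exact injective_aeval_X_pow (algebraMap ℤ ℚ).injective_int (Nat.pos_of_ne_zero hc₀)
  intro n hn
  obtain ⟨k, rfl⟩ : ∃ k, n = k + 3 := ⟨n - 3, by omega⟩
  obtain ⟨P, hP⟩ := exists_eq_apply_of_rank_two_exchange hc₀ (by exact_mod_cast (he 0).trans ha1)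
    (by exact_mod_cast (he 1).trans ha2) he_mono he_rec Y hY (y := rescaled x a)
    (by simp [rescaled_zero hx₁ hx ha1 ha2, Y]) (by simp [rescaled_one hx₁ hx₂ hx ha ha1 ha2, Y])
    (fun k hk ↦ by
      convert rescaled_mul_rescaled hx₁ hx₂ hx ha hk using 2
      simp [Y, coeffMonomial, ← he, mul_pow, ← pow_mul, mul_comm]) k
  exact ⟨P, by simpa [rescaled] using hP⟩
end

section
/- Let c ≥ 2 be an integer and (a_n) as above. For n ≥ 3 and integers t_0, …, t_{n−2} with 0 ≤ t_i ≤ a_{i+1} − c·s_i for 0 ≤ i ≤ n−2 (where s_i = Σ_{j=0}^{i−1} a_{i−j+1}·t_j), one has s_{n−1}·a_{n−2} − s_{n−2}·a_{n−1} = Σ_{i=2}^{n−2} t_i·a_i ≥ 0. -/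
/-!
The sequence `s` solves the recurrence of `a` with forcing term `t`:
`s (k + 2) = c * s (k + 1) - s k + t (k + 1)`. Hence the Casoratian
`W k = s (k + 1) * a k - s k * a (k + 1)` grows by exactly `t (k + 1) * a (k + 1)` at each step,
so `W k = ∑ j ≤ k, t j * a j`. The constraint at `i = 0` forces `t 0 = 0`, the term `j = 1`
vanishes because `a 1 = 0`, and the remaining terms are nonnegative because `c ≥ 2` makes `a`
nonnegative (indeed nondecreasing) from index `1` on.
-/

open Finset

/-- `a n = U_{n-2}(c, 1)`, the Lucas sequence shifted by two. The value `a 0` is unconstrained. -/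
structure IsShiftedLucasSeq (c : ℤ) (a : ℕ → ℤ) : Prop where
  one : a 1 = 0
  two : a 2 = 1
  add_three : ∀ m, a (m + 3) = c * a (m + 2) - a (m + 1)

def lucasConv (a t : ℕ → ℤ) (i : ℕ) : ℤ :=
  ∑ j ∈ range i, a (i - j + 1) * t j

namespace IsShiftedLucasSeq

variable {c : ℤ} {a : ℕ → ℤ}

theorem of_rec_sub (ha1 : a 1 = 0) (ha2 : a 2 = 1)
    (harec : ∀ m : ℕ, 3 ≤ m → a m = c * a (m - 1) - a (m - 2)) : IsShiftedLucasSeq c a :=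
  ⟨ha1, ha2, fun m => by simpa using harec (m + 3) (by omega)⟩

theorem nonneg_and_le_succ (h : IsShiftedLucasSeq c a) (hc : 2 ≤ c) :
    ∀ m, 0 ≤ a (m + 1) ∧ a (m + 1) ≤ a (m + 2)
  | 0 => by simp [h.one, h.two]
  | m + 1 => by
    obtain ⟨hm, hmono⟩ := h.nonneg_and_le_succ hc m
    refine ⟨hm.trans hmono, ?_⟩
    rw [h.add_three m]
    nlinarith

theorem nonneg (h : IsShiftedLucasSeq c a) (hc : 2 ≤ c) {m : ℕ} (hm : 1 ≤ m) : 0 ≤ a m := by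
  obtain ⟨m, rfl⟩ := Nat.exists_eq_add_of_le' hm
  exact (h.nonneg_and_le_succ hc m).1

theorem lucasConv_add_two (h : IsShiftedLucasSeq c a) (t : ℕ → ℤ) (k : ℕ) :
    lucasConv a t (k + 2) = c * lucasConv a t (k + 1) - lucasConv a t k + t (k + 1) := by
  have hk : lucasConv a t k = ∑ j ∈ range (k + 1), a (k - j + 1) * t j := by
    simp [lucasConv, sum_range_succ, h.one]
  have hk2 : lucasConv a t (k + 2) = ∑ j ∈ range (k + 1), a (k + 2 - j + 1) * t j + t (k + 1) := by
    rw [lucasConv, sum_range_succ, show k + 2 - (k + 1) + 1 = 2 by omega, h.two, one_mul]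
  rw [hk, hk2, lucasConv, mul_sum, ← sum_sub_distrib]
  congr 1
  refine sum_congr rfl fun j hj => ?_
  have hj : j ≤ k := Nat.lt_succ_iff.mp (mem_range.mp hj)
  rw [show k + 2 - j + 1 = k - j + 3 by omega, show k + 1 - j + 1 = k - j + 2 by omega, h.add_three]
  ring

theorem lucasConv_succ_mul_sub (h : IsShiftedLucasSeq c a) {t : ℕ → ℤ} (ht0 : t 0 = 0) :
    ∀ k, lucasConv a t (k + 1) * a k - lucasConv a t k * a (k + 1) =
      ∑ j ∈ range (k + 1), t j * a j
  | 0 => by simp [lucasConv, ht0]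
  | 1 => by simp [lucasConv, sum_range_succ, ht0, h.one]
  | k + 2 => by
    rw [sum_range_succ, ← h.lucasConv_succ_mul_sub ht0 (k + 1)]
    linear_combination a (k + 2) * h.lucasConv_add_two t (k + 1) -
      lucasConv a t (k + 2) * h.add_three k

theorem sum_range_eq_sum_Icc (h : IsShiftedLucasSeq c a) {t : ℕ → ℤ} (ht0 : t 0 = 0) (k : ℕ) :
    ∑ j ∈ range (k + 1), t j * a j = ∑ j ∈ Icc 2 k, t j * a j := by
  refine (sum_subset (fun j hj => ?_) fun j hj hj' => ?_).symm
  · simp only [mem_Icc] at hj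
    exact mem_range.mpr (by omega)
  · obtain rfl | rfl : j = 0 ∨ j = 1 := by simp only [mem_range, mem_Icc] at hj hj'; omega
    · simp [ht0]
    · simp [h.one]

end IsShiftedLucasSeq

theorem stmt_14_general (c : ℤ) (hc : 2 ≤ c) (a : ℕ → ℤ) (ha1 : a 1 = 0) (ha2 : a 2 = 1)
    (harec : ∀ m : ℕ, 3 ≤ m → a m = c * a (m - 1) - a (m - 2))
    (n : ℕ) (t : ℕ → ℤ) (s : ℕ → ℤ)
    (hs : ∀ i : ℕ, s i = ∑ j ∈ Finset.range i, a (i - j + 1) * t j)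
    (ht : ∀ i : ℕ, i ≤ n - 2 → 0 ≤ t i ∧ t i ≤ a (i + 1) - c * s i) :
    s (n - 1) * a (n - 2) - s (n - 2) * a (n - 1) = ∑ i ∈ Finset.Icc 2 (n - 2), t i * a i ∧
      0 ≤ s (n - 1) * a (n - 2) - s (n - 2) * a (n - 1) := by
  have ha : IsShiftedLucasSeq c a := .of_rec_sub ha1 ha2 harec
  obtain rfl : s = lucasConv a t := funext hs
  have ht0 : t 0 = 0 := by
    have := ht 0 (Nat.zero_le _)
    simp only [lucasConv, range_zero, sum_empty, zero_add, ha1, mul_zero, sub_zero] at this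
    exact le_antisymm this.2 this.1
  obtain hn | ⟨k, rfl⟩ : n < 2 ∨ ∃ k, n = k + 2 :=
    (Nat.lt_or_ge n 2).imp_right fun hn => ⟨n - 2, by omega⟩
  · rw [show n - 1 = n - 2 by omega, sub_self, Icc_eq_empty (by omega), sum_empty]
    exact ⟨rfl, le_rfl⟩
  · rw [show k + 2 - 1 = k + 1 by omega, Nat.add_sub_cancel,
      ha.lucasConv_succ_mul_sub ht0 k, ha.sum_range_eq_sum_Icc ht0]
    refine ⟨rfl, sum_nonneg fun i hi => ?_⟩
    rw [mem_Icc] at hi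
    exact mul_nonneg (ht i (by omega)).1 (ha.nonneg hc (by omega))

theorem stmt_14 (c : ℤ) (hc : 2 ≤ c) (a : ℕ → ℤ) (ha1 : a 1 = 0) (ha2 : a 2 = 1)
    (harec : ∀ m : ℕ, 3 ≤ m → a m = c * a (m - 1) - a (m - 2))
    (n : ℕ) (hn : 3 ≤ n) (t : ℕ → ℤ) (s : ℕ → ℤ)
    (hs : ∀ i : ℕ, s i = ∑ j ∈ Finset.range i, a (i - j + 1) * t j)
    (ht : ∀ i : ℕ, i ≤ n - 2 → 0 ≤ t i ∧ t i ≤ a (i + 1) - c * s i) :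
    s (n - 1) * a (n - 2) - s (n - 2) * a (n - 1) = ∑ i ∈ Finset.Icc 2 (n - 2), t i * a i ∧
      0 ≤ s (n - 1) * a (n - 2) - s (n - 2) * a (n - 1) :=
  stmt_14_general c hc a ha1 ha2 harec n t s hs ht
end

section
/- Let c ≥ 2, n ≥ 5, and (a_n), s_i as above. Suppose integers t_0,…,t_{n−2} satisfy 0 ≤ t_i ≤ a_{i+1} − c·s_i for 0 ≤ i ≤ n−3, s_{n−1}·a_{n−2} − s_{n−2}·a_{n−1} ≥ 0, a_{n−1} − c·s_{n−2} < 0, and s_n·a_{n−1} − s_{n−1}·a_n ≥ 0 (where s_n = c·s_{n−1} − s_{n−2} + t_{n−1} for some integer t_{n−1}). Then a_n − c·s_{n−1} < 0. -/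
lemma aux_pos (c : ℤ) (hc : 2 ≤ c) (a : ℕ → ℤ) (ha1 : a 1 = 0) (ha2 : a 2 = 1)
    (harec : ∀ m : ℕ, 3 ≤ m → a m = c * a (m - 1) - a (m - 2)) :
    ∀ m : ℕ, 1 ≤ m → 0 ≤ a m ∧ a m + 1 ≤ a (m + 1) := by
  intro m hm
  induction m with
  | zero => omega
  | succ k ih =>
    rcases Nat.eq_or_lt_of_le hm with h | h
    · simp only [← h]; simp [ha1, ha2]
    · have hk : 1 ≤ k := by omega
      obtain ⟨h0, h1⟩ := ih hk
      have hrec := harec (k + 2) (by omega)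
      simp only [show k + 2 - 1 = k + 1 from by omega, show k + 2 - 2 = k from by omega] at hrec
      rw [show k + 1 + 1 = k + 2 from by omega]
      constructor
      · linarith
      · nlinarith [mul_le_mul_of_nonneg_right hc (by linarith : (0:ℤ) ≤ a (k+1))]

lemma aux_det (c : ℤ) (a : ℕ → ℤ) (ha1 : a 1 = 0) (ha2 : a 2 = 1)
    (harec : ∀ m : ℕ, 3 ≤ m → a m = c * a (m - 1) - a (m - 2)) :
    ∀ m : ℕ, 1 ≤ m → a (m + 1) ^ 2 - a (m + 2) * a m = 1 := by
  intro m hm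
  induction m with
  | zero => omega
  | succ k ih =>
    rcases Nat.eq_or_lt_of_le hm with h | h
    · simp only [← h]
      have hrec := harec 3 (by omega)
      norm_num at hrec
      simp [ha1, ha2, hrec]
    · have hk : 1 ≤ k := by omega
      have IH := ih hk
      have hrec := harec (k + 3) (by omega)
      simp only [show k + 3 - 1 = k + 2 from by omega,
        show k + 3 - 2 = k + 1 from by omega] at hrec
      have hrec2 := harec (k + 2) (by omega)
      simp only [show k + 2 - 1 = k + 1 from by omega, show k + 2 - 2 = k from by omega] at hrec2
      rw [show k + 1 + 1 = k + 2 from by omega, show k + 1 + 2 = k + 3 from by omega]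
      linear_combination IH - a (k + 1) * hrec + a (k + 2) * hrec2

theorem stmt_16 (c : ℤ) (hc : 2 ≤ c) (a : ℕ → ℤ) (ha1 : a 1 = 0) (ha2 : a 2 = 1)
    (harec : ∀ m : ℕ, 3 ≤ m → a m = c * a (m - 1) - a (m - 2))
    (n : ℕ) (hn : 5 ≤ n) (t : ℕ → ℤ) (s : ℕ → ℤ)
    (hs : ∀ i : ℕ, s i = ∑ j ∈ Finset.range i, a (i - j + 1) * t j)
    (ht : ∀ i : ℕ, i ≤ n - 3 → 0 ≤ t i ∧ t i ≤ a (i + 1) - c * s i)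
    (h1 : 0 ≤ s (n - 1) * a (n - 2) - s (n - 2) * a (n - 1))
    (h2 : a (n - 1) - c * s (n - 2) < 0)
    (h3 : 0 ≤ s n * a (n - 1) - s (n - 1) * a n) :
    a n - c * s (n - 1) < 0 := by
  obtain ⟨k, rfl⟩ : ∃ k, n = k + 5 := ⟨n - 5, by omega⟩
  simp only [show k + 5 - 1 = k + 4 from by omega,
    show k + 5 - 2 = k + 3 from by omega] at h1 h2 ⊢
  have hpos := aux_pos c hc a ha1 ha2 harec
  obtain ⟨p2, p2'⟩ := hpos (k + 2) (by omega)
  obtain ⟨p3, p3'⟩ := hpos (k + 3) (by omega)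
  obtain ⟨p4, p4'⟩ := hpos (k + 4) (by omega)
  have hdet := aux_det c a ha1 ha2 harec (k + 3) (by omega)
  have h3pos : 1 ≤ a (k + 3) := by linarith
  nlinarith [mul_le_mul_of_nonneg_left h1 (by linarith : (0:ℤ) ≤ c),
    mul_le_mul_of_nonneg_right (by linarith : a (k+4) + 1 ≤ c * s (k+3))
      (by linarith : (0:ℤ) ≤ a (k+4)),
    mul_pos (by linarith : (0:ℤ) < a (k+3)) (by linarith : (0:ℤ) < a (k+3))]
end

section
/- Under the hypotheses of the previous statement (in particular a_n − c·s_{n−1} < 0, a_{n−1} − c·s_{n−2} < 0, and s_n·a_{n−1} − s_{n−1}·a_n ≥ 0), one has s_{n−2} > a_n − s_n, and hence a_n − c·s_{n−1} < t_{n−1}. -/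
set_option maxHeartbeats 1000000


theorem stmt_17 (c : ℤ) (hc : 2 ≤ c) (a : ℕ → ℤ) (ha1 : a 1 = 0) (ha2 : a 2 = 1)
    (harec : ∀ m : ℕ, 3 ≤ m → a m = c * a (m - 1) - a (m - 2))
    (n : ℕ) (hn : 5 ≤ n) (t : ℕ → ℤ) (s : ℕ → ℤ)
    (hs : ∀ i : ℕ, s i = ∑ j ∈ Finset.range i, a (i - j + 1) * t j)
    (ht : ∀ i : ℕ, i ≤ n - 3 → 0 ≤ t i ∧ t i ≤ a (i + 1) - c * s i)
    (h1 : 0 ≤ s (n - 1) * a (n - 2) - s (n - 2) * a (n - 1))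
    (h2 : a (n - 1) - c * s (n - 2) < 0)
    (h3 : 0 ≤ s n * a (n - 1) - s (n - 1) * a n)
    (h4 : a n - c * s (n - 1) < 0) :
    a n - s n < s (n - 2) ∧ a n - c * s (n - 1) < t (n - 1) := by
  obtain ⟨m, rfl⟩ : ∃ m, n = m + 5 := ⟨n - 5, by omega⟩
  have r1 : m + 5 - 1 = m + 4 := by omega
  have r2 : m + 5 - 2 = m + 3 := by omega
  simp only [r1, r2] at h1 h2 h3 h4 ⊢
  -- a 3 = c
  have ha3 : a 3 = c := by
    have h := harec 3 (by norm_num)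
    norm_num [ha1, ha2] at h
    exact h
  -- positivity and monotonicity
  have hpos : ∀ k : ℕ, 1 ≤ a (k + 2) ∧ a (k + 2) ≤ a (k + 3) := by
    intro k
    induction k with
    | zero => refine ⟨by rw [ha2], ?_⟩; rw [ha2, ha3]; linarith
    | succ k ih =>
      have h := harec (k + 4) (by omega)
      have e5 : k + 4 - 1 = k + 3 := by omega
      have e6 : k + 4 - 2 = k + 2 := by omega
      rw [e5, e6] at h
      constructor
      · nlinarith [ih.1, ih.2]
      · nlinarith [ih.1, ih.2]
  -- Cassini-type identity
  have hid : ∀ k : ℕ, a (k + 3) * a (k + 1) = a (k + 2) ^ 2 - 1 := by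
    intro k
    induction k with
    | zero => rw [ha1, ha2]; ring
    | succ k ih =>
      have hw := harec (k + 4) (by omega)
      have e5 : k + 4 - 1 = k + 3 := by omega
      have e6 : k + 4 - 2 = k + 2 := by omega
      rw [e5, e6] at hw
      have hz := harec (k + 3) (by omega)
      have e7 : k + 3 - 1 = k + 2 := by omega
      have e8 : k + 3 - 2 = k + 1 := by omega
      rw [e7, e8] at hz
      linear_combination a (k + 2) * hw - a (k + 3) * hz + ih
  have hrec : a (m + 5) = c * a (m + 4) - a (m + 3) := by
    have h := harec (m + 5) (by omega)
    rw [r1, r2] at h; exact h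
  have hid5 : a (m + 5) * a (m + 3) = a (m + 4) ^ 2 - 1 := hid (m + 2)
  have hp4 : (1 : ℤ) ≤ a (m + 4) := (hpos (m + 2)).1
  have hp5 : (1 : ℤ) ≤ a (m + 5) := (hpos (m + 3)).1
  -- sum identity : s (m+5) = c * s (m+4) - s (m+3) + t (m+4)
  have hsum : s (m + 5) = c * s (m + 4) - s (m + 3) + t (m + 4) := by
    have e1 := hs (m + 5)
    have e2 := hs (m + 4)
    have e3 := hs (m + 3)
    rw [Finset.sum_range_succ] at e1
    have hcoef : ∀ j ∈ Finset.range (m + 4),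
        a (m + 5 - j + 1) * t j
          = c * (a (m + 4 - j + 1) * t j) - a (m + 3 - j + 1) * t j := by
      intro j hj
      simp only [Finset.mem_range] at hj
      have h := harec (m + 6 - j) (by omega)
      have e4 : m + 5 - j + 1 = m + 6 - j := by omega
      have e5 : m + 6 - j - 1 = m + 4 - j + 1 := by omega
      have e6 : m + 6 - j - 2 = m + 3 - j + 1 := by omega
      rw [e4, h, e5, e6]; ring
    rw [Finset.sum_congr rfl hcoef, Finset.sum_sub_distrib, ← Finset.mul_sum,
      ← e2, Finset.sum_range_succ] at e1
    have e7 : m + 5 - (m + 4) + 1 = 2 := by omega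
    have e8 : m + 3 - (m + 3) + 1 = 1 := by omega
    rw [e7, e8, ha1, ha2, ← e3] at e1
    linarith
  -- main inequality
  have H2 : a (m + 4) * a (m + 4) < c * s (m + 3) * a (m + 4) := by
    nlinarith [mul_lt_mul_of_pos_right h2 (by linarith : (0:ℤ) < a (m + 4))]
  have H4 : a (m + 5) * a (m + 5) < c * s (m + 4) * a (m + 5) := by
    nlinarith [mul_lt_mul_of_pos_right h4 (by linarith : (0:ℤ) < a (m + 5))]
  have H3 : 0 ≤ c * (s (m + 5) * a (m + 4) - s (m + 4) * a (m + 5)) :=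
    mul_nonneg (by linarith) h3
  have key2 : c * a (m + 4) * a (m + 5) = a (m + 4) ^ 2 + a (m + 5) ^ 2 - 1 := by
    linear_combination hid5 - a (m + 5) * hrec
  have hca4 : (2 : ℤ) ≤ c * a (m + 4) := by nlinarith
  clear hs ht h1 h2 h3 h4 harec hpos hid
  have hstep : 0 < c * a (m + 4) * (s (m + 3) + s (m + 5) - a (m + 5)) := by
    nlinarith [H2, H4, H3, key2]
  have goal1 : a (m + 5) - s (m + 5) < s (m + 3) := by
    nlinarith [hstep, hca4]
  exact ⟨goal1, by linarith⟩
end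

section
/- For any integer c ≥ 1 and integers e_1, e_2 with e_2·a_{n−1} − e_1·a_{n−2} < 0, the dimension counting inner product is negative: ⟨(e_1,e_2), (a_{n−1}−e_1, a_{n−2}−e_2)⟩ < 0, where ⟨(d_1,d_2),(f_1,f_2)⟩ = d_1 f_1 + d_2 f_2 − c·d_1 f_2 is the Euler form of the c-Kronecker quiver, provided 0 ≤ e_1 ≤ a_{n−1} and 0 ≤ e_2 ≤ a_{n−2} and n ≥ 3. -/
/-- Key lemma: pure arithmetic version, by strong induction on `q.toNat`. -/
lemma key18 (k : ℕ) : ∀ (c p q e1 e2 : ℤ), 1 ≤ c → q.toNat ≤ k → 1 ≤ q → q ≤ p →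
    p ^ 2 + q ^ 2 - c * p * q = 1 → 0 ≤ e1 → e1 ≤ p → 0 ≤ e2 → e2 ≤ q →
    e2 * p - e1 * q < 0 →
    e1 * (p - e1) + e2 * (q - e2) - c * e1 * (q - e2) < 0 := by
  induction k with
  | zero =>
    intro c p q e1 e2 hc hk hq1 _ _ _ _ _ _ _
    omega
  | succ k ih =>
    intro c p q e1 e2 hc hk hq1 hqp hJ he1 he1p he2 he2q h
    have hp1 : 1 ≤ p := le_trans hq1 hqp
    have hA : e2 * p - e1 * q + 1 ≤ 0 := by
      have := Int.add_one_le_iff.mpr h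
      linarith
    have he11 : 1 ≤ e1 := by
      nlinarith [mul_nonneg he2 (by linarith : (0:ℤ) ≤ p)]
    have hf2 : e2 + 1 ≤ q := by
      nlinarith [mul_nonneg (by linarith : (0:ℤ) ≤ q) (by linarith : (0:ℤ) ≤ p - e1)]
    have hr0 : 0 ≤ c * q - p := by
      nlinarith [sq_nonneg q]
    have hJ2 : q ^ 2 + (c * q - p) ^ 2 - c * q * (c * q - p) = 1 := by linear_combination hJ
    have hqcr : q ≤ c * (c * q - p) + c := by
      nlinarith [sq_nonneg (c * q - p), mul_nonneg (by linarith : (0:ℤ) ≤ q - 1) (by linarith : (0:ℤ) ≤ c)]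
    by_cases hB : c * (q - e2) + 1 ≤ p - e1
    · exfalso
      have hBe1 : e1 ≤ c * e2 - (c * q - p) - 1 := by linarith
      nlinarith [mul_le_mul_of_nonneg_right hBe1 (by linarith : (0:ℤ) ≤ q),
        mul_le_mul_of_nonneg_right he2q hr0]
    · by_cases hC : c * e2 + 1 ≤ e1
      · -- direct case
        nlinarith [mul_nonneg he2 (by linarith : (0:ℤ) ≤ c * (c * q - p) + c - q),
          sq_nonneg e2,
          mul_nonneg (by linarith : (0:ℤ) ≤ e1 - c * e2 - 1) (by linarith : (0:ℤ) ≤ c * q - p + 1),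
          mul_nonneg (by linarith : (0:ℤ) ≤ e1) (by linarith : (0:ℤ) ≤ c * (q - e2) - (p - e1) - (c * q - p) - 1),
          mul_nonneg he2 hr0]
      · -- reflection case
        push_neg at hB hC
        have hr1 : 1 ≤ c * q - p := by
          rcases (by omega : 1 ≤ c * q - p ∨ c * q - p = 0) with h' | h'
          · exact h'
          · exfalso
            have hq2 : q ^ 2 = 1 := by rw [h'] at hJ2; linarith
            have hq : q = 1 := by nlinarith [sq_nonneg (q - 1)]
            have he20 : e2 = 0 := by omega
            rw [he20] at hC
            linarith
        have hpr : p * (c * q - p) = q ^ 2 - 1 := by linear_combination -hJ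
        have hrltq : c * q - p < q := by
          have h1 : q * q ≤ p * q := mul_le_mul_of_nonneg_right hqp (by linarith)
          have h2 : p * (c * q - p) < p * q := by linarith [hpr, h1]
          exact lt_of_mul_lt_mul_left h2 (by linarith)
        have hrq : c * q - p ≤ q - 1 := by linarith [Int.add_one_le_iff.mpr hrltq]
        have hE := ih c q (c * q - p) e2 (c * e2 - e1) hc (by omega) hr1 (by linarith)
          (by linear_combination hJ) he2 he2q (by linarith) (by linarith)
          (by linarith [show (c * e2 - e1) * q - e2 * (c * q - p) = -(e1 * q - e2 * p) from by ring])
        have heq : e1 * (p - e1) + e2 * (q - e2) - c * e1 * (q - e2)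
            = e2 * (q - e2) + (c * e2 - e1) * ((c * q - p) - (c * e2 - e1))
              - c * e2 * ((c * q - p) - (c * e2 - e1)) := by ring
        rw [heq]
        exact hE

theorem stmt_18 (c : ℤ) (hc : 1 ≤ c) (a : ℕ → ℤ) (ha1 : a 1 = 0) (ha2 : a 2 = 1)
    (harec : ∀ m : ℕ, 3 ≤ m → a m = c * a (m - 1) - a (m - 2))
    (n : ℕ) (hn : 3 ≤ n) (e1 e2 : ℤ)
    (he1 : 0 ≤ e1) (he1' : e1 ≤ a (n - 1)) (he2 : 0 ≤ e2) (he2' : e2 ≤ a (n - 2))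
    (h : e2 * a (n - 1) - e1 * a (n - 2) < 0) :
    e1 * (a (n - 1) - e1) + e2 * (a (n - 2) - e2) - c * e1 * (a (n - 2) - e2) < 0 := by
  have inv : ∀ m, 2 ≤ m → a m ^ 2 + a (m - 1) ^ 2 - c * a m * a (m - 1) = 1 := by
    intro m hm
    induction m, hm using Nat.le_induction with
    | base => norm_num [ha1, ha2]
    | succ m hm ih =>
      have e1 : m + 1 - 1 = m := by omega
      have e2 : m + 1 - 2 = m - 1 := by omega
      have hrec := harec (m + 1) (by omega)
      rw [e1, e2] at hrec
      rw [e1, hrec]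
      linear_combination ih
  set p := a (n - 1) with hp
  set q := a (n - 2) with hq
  have hJ : p ^ 2 + q ^ 2 - c * p * q = 1 := by
    have := inv (n - 1) (by omega)
    have e12 : n - 1 - 1 = n - 2 := by omega
    rw [e12] at this
    linarith
  have hA : e2 * p - e1 * q + 1 ≤ 0 := by
    have := Int.add_one_le_iff.mpr h
    linarith
  have he11 : 1 ≤ e1 := by
    nlinarith [mul_nonneg he2 (by linarith : (0:ℤ) ≤ p)]
  have hq1 : 1 ≤ q := by
    nlinarith [mul_nonneg he2 (by linarith : (0:ℤ) ≤ p)]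
  have hp1 : 1 ≤ p := by linarith
  have hqp : q ≤ p := by
    rcases eq_or_lt_of_le hc with h1 | h2
    · -- c = 1
      have hpq : 1 ≤ p * q := by
        have := mul_pos (show (0:ℤ) < p by linarith) (show (0:ℤ) < q by linarith)
        linarith [Int.add_one_le_iff.mpr this]
      nlinarith [sq_nonneg (p - q)]
    · -- 2 ≤ c
      have hc2 : 2 ≤ c := h2
      have mono : ∀ m, 2 ≤ m → 0 ≤ a (m - 1) ∧ a (m - 1) ≤ a m := by
        intro m hm
        induction m, hm using Nat.le_induction with
        | base => norm_num [ha1, ha2]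
        | succ m hm ih =>
          have e1 : m + 1 - 1 = m := by omega
          have e2 : m + 1 - 2 = m - 1 := by omega
          have hrec := harec (m + 1) (by omega)
          rw [e1, e2] at hrec
          rw [e1]
          obtain ⟨ih1, ih2⟩ := ih
          constructor
          · linarith
          · nlinarith
      have := mono (n - 1) (by omega)
      have e12 : n - 1 - 1 = n - 2 := by omega
      rw [e12] at this
      exact this.2
  exact key18 q.toNat c p q e1 e2 hc le_rfl hq1 hqp hJ he1 he1' he2 he2' h
end

section
/- For c ≥ 2 and all n ∈ ℤ, the rational functions x_n defined by x_{n+1} = (x_n^c + 1)/x_{n−1} satisfy: x_n is a Laurent polynomial in x_1 and x_2 with integer coefficients (the Laurent phenomenon for A(c,c)). -/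
/-!
Work in the Laurent polynomial ring `ℤ[x₁^±1, x₂^±1]` inside the fraction field. If
`d a = b^c + 1` and `e b = d^c + 1`, then `d` is coprime to `b^c` (as `a d - b^c = 1`) and
`b^c (e^c + 1) = ((d^c + 1)^c - 1) + d a ≡ 0 (mod d)`, so `d ∣ e^c + 1`: the term `(e^c + 1) / d`
after `a, b, d, e` is again a Laurent polynomial. Induction over four consecutive terms, run
forwards from `(x₁, x₂)` and backwards from `(x₂, x₁)`, reaches every `xₙ`. Dividing requires the
terms to be nonzero; this is guaranteed by their value at `x₁ = x₂ = 1`, which stays positive along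
the recurrence.
-/

open MvPolynomial

theorem IsLocalization.Away.lift_injective {R S P : Type*} [CommRing R] [IsDomain R]
    [CommRing S] [Algebra R S] [CommRing P] {x : R} [IsLocalization.Away x S] (hx : x ≠ 0)
    {g : R →+* P} (hg : Function.Injective g) (hgx : IsUnit (g x)) :
    Function.Injective (IsLocalization.Away.lift x hgx : S →+* P) := by
  refine (IsLocalization.lift_injective_iff _).mpr fun a b => ?_
  rw [(IsLocalization.injective S (powers_le_nonZeroDivisors_of_noZeroDivisors hx)).eq_iff,
    hg.eq_iff]

noncomputable section

namespace RankTwoExchange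

theorem mul_eq_of_eq_div {K : Type*} [Field K] {a b N : K} (h : a = N / b)
    (hab : a ≠ 0 ∨ b ≠ 0) : a * b = N := by
  have hb : b ≠ 0 := hab.elim (fun ha hb => ha (by rw [h, hb, div_zero])) id
  rw [h, div_mul_cancel₀ N hb]

theorem dvd_pow_add_one_of_exchange {R : Type*} [CommRing R] {c : ℕ} (hc : c ≠ 0)
    {a b d e : R} (hda : d * a = b ^ c + 1) (heb : e * b = d ^ c + 1) : d ∣ e ^ c + 1 := by
  have hcop : IsCoprime d (b ^ c) := ⟨a, -1, by linear_combination hda⟩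
  have hgeom : d ∣ (d ^ c + 1) ^ c - 1 := by
    have h := sub_dvd_pow_sub_pow (d ^ c + 1) 1 c
    rw [add_sub_cancel_right, one_pow] at h
    exact (dvd_pow_self d hc).trans h
  have key : b ^ c * (e ^ c + 1) = ((d ^ c + 1) ^ c - 1) + d * a := by
    have h := congrArg (· ^ c) heb
    simp only [mul_pow] at h
    linear_combination h - hda
  exact hcop.dvd_of_dvd_mul_left (key ▸ dvd_add hgeom (dvd_mul_right d a))

section PosImage

variable {R K L : Type*} [CommRing R] [CommRing K] [CommRing L] [LinearOrder L]

def posImage (f : R →+* K) (ε : R →+* L) : Set K := {x | ∃ y, f y = x ∧ 0 < ε y}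

variable {f : R →+* K} {ε : R →+* L}

theorem posImage_subset_range : posImage f ε ⊆ Set.range f :=
  fun _ ⟨y, hy, _⟩ => ⟨y, hy⟩

theorem ne_zero_of_mem_posImage (hf : Function.Injective f) {x : K} (hx : x ∈ posImage f ε) :
    x ≠ 0 := by
  obtain ⟨y, rfl, hy⟩ := hx
  rw [ne_eq, map_eq_zero_iff f hf]
  rintro rfl
  simp at hy

variable [IsDomain K] [IsStrictOrderedRing L]

theorem mem_posImage_of_mul_eq (hf : Function.Injective f) {z : K} {d w : R} (hd : 0 < ε d)
    (hdw : 0 < ε (d * w)) (h : z * f d = f (d * w)) : z ∈ posImage f ε := by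
  refine ⟨w, mul_right_cancel₀ (ne_zero_of_mem_posImage hf ⟨d, rfl, hd⟩) ?_, ?_⟩
  · rw [h, map_mul, mul_comm]
  · exact (pos_iff_pos_of_mul_pos (map_mul ε d w ▸ hdw)).mp hd

theorem mem_posImage_of_mul_isUnit (hf : Function.Injective f) {c : ℕ} {u : R} (hu : IsUnit u)
    (hεu : 0 < ε u) {b z : K} (hb : b ∈ posImage f ε) (h : z * f u = b ^ c + 1) :
    z ∈ posImage f ε := by
  obtain ⟨b, rfl, hb⟩ := hb
  obtain ⟨u, rfl⟩ := hu
  refine mem_posImage_of_mul_eq hf hεu (w := ↑u⁻¹ * (b ^ c + 1)) ?_ ?_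
  · rw [Units.mul_inv_cancel_left, map_add, map_pow, map_one]
    positivity
  · rw [Units.mul_inv_cancel_left, h, map_add, map_pow, map_one]

theorem mem_posImage_of_exchange (hf : Function.Injective f) {c : ℕ} (hc : c ≠ 0)
    {a b d e z : K} (ha : a ∈ Set.range f) (hb : b ∈ Set.range f) (hd : d ∈ posImage f ε)
    (he : e ∈ posImage f ε) (hda : d * a = b ^ c + 1) (heb : e * b = d ^ c + 1)
    (hze : z * d = e ^ c + 1) : z ∈ posImage f ε := by
  obtain ⟨a, rfl⟩ := ha
  obtain ⟨b, rfl⟩ := hb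
  obtain ⟨d, rfl, hd⟩ := hd
  obtain ⟨e, rfl, he⟩ := he
  obtain ⟨w, hw⟩ := dvd_pow_add_one_of_exchange hc (a := a) (b := b)
    (hf (by simpa using hda)) (hf (by simpa using heb))
  refine mem_posImage_of_mul_eq hf hd (w := w) ?_ ?_
  · rw [← hw, map_add, map_pow, map_one]
    positivity
  · rw [← hw, hze, map_add, map_pow, map_one]

theorem mem_posImage_of_exchange_seq (hf : Function.Injective f) {c : ℕ} (hc : c ≠ 0)
    {z : ℕ → K} (hrec : ∀ k, z k ≠ 0 → z (k + 2) * z k = z (k + 1) ^ c + 1)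
    {u v : R} (hu : IsUnit u) (hv : IsUnit v) (hεu : 0 < ε u) (hεv : 0 < ε v)
    (h0 : z 0 = f u) (h1 : z 1 = f v) (k : ℕ) : z k ∈ posImage f ε := by
  have hne {x : K} : x ∈ posImage f ε → x ≠ 0 := ne_zero_of_mem_posImage hf
  suffices ∀ k, z k ∈ posImage f ε ∧ z (k + 1) ∈ posImage f ε ∧ z (k + 2) ∈ posImage f ε ∧
      z (k + 3) ∈ posImage f ε from (this k).1
  intro k
  induction k with
  | zero =>
    have hz0 : z 0 ∈ posImage f ε := h0 ▸ ⟨u, rfl, hεu⟩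
    have hz1 : z 1 ∈ posImage f ε := h1 ▸ ⟨v, rfl, hεv⟩
    have hz2 := mem_posImage_of_mul_isUnit hf hu hεu hz1 (h0 ▸ hrec 0 (hne hz0))
    exact ⟨hz0, hz1, hz2, mem_posImage_of_mul_isUnit hf hv hεv hz2 (h1 ▸ hrec 1 (hne hz1))⟩
  | succ k ih =>
    obtain ⟨ha, hb, hd, he⟩ := ih
    exact ⟨hb, hd, he, mem_posImage_of_exchange hf hc (posImage_subset_range ha)
      (posImage_subset_range hb) hd he (hrec k (hne ha)) (hrec (k + 1) (hne hb))
      (hrec (k + 2) (hne hd))⟩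

theorem mem_posImage_of_exchange_int (hf : Function.Injective f) {c : ℕ} (hc : c ≠ 0)
    {x : ℤ → K}
    (hrec : ∀ n, x (n - 1) ≠ 0 ∨ x (n + 1) ≠ 0 → x (n + 1) * x (n - 1) = x n ^ c + 1)
    {u v : R} (hu : IsUnit u) (hv : IsUnit v) (hεu : 0 < ε u) (hεv : 0 < ε v)
    (h1 : x 1 = f u) (h2 : x 2 = f v) (n : ℤ) : x n ∈ posImage f ε := by
  rcases le_or_gt 1 n with hn | hn
  · have hrec' : ∀ k : ℕ, x (k + 1) ≠ 0 →
        x ((k + 2 : ℕ) + 1) * x (k + 1) = x ((k + 1 : ℕ) + 1) ^ c + 1 := by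
      intro k hk
      have h := hrec (k + 2) (Or.inl (by convert hk using 2; ring))
      push_cast
      ring_nf at h ⊢
      exact h
    have := mem_posImage_of_exchange_seq hf hc (z := fun k : ℕ => x (k + 1)) hrec' hu hv hεu
      hεv (by simpa using h1) (by norm_num [h2])
    obtain ⟨k, rfl⟩ : ∃ k : ℕ, n = k + 1 := ⟨(n - 1).toNat, by omega⟩
    exact this k
  · have hrec' : ∀ k : ℕ, x (2 - k) ≠ 0 →
        x (2 - (k + 2 : ℕ)) * x (2 - k) = x (2 - (k + 1 : ℕ)) ^ c + 1 := by
      intro k hk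
      have h := hrec (1 - k) (Or.inr (by convert hk using 2; ring))
      push_cast
      ring_nf at h ⊢
      exact h
    have := mem_posImage_of_exchange_seq hf hc (z := fun k : ℕ => x (2 - k)) hrec' hv hu hεv
      hεu (by simpa using h2) (by norm_num [h1])
    obtain ⟨k, rfl⟩ : ∃ k : ℕ, n = 2 - k := ⟨(2 - n).toNat, by omega⟩
    exact this k

end PosImage

section Laurent

variable (σ : Type*)

def intToFrac : MvPolynomial σ ℤ →+* FractionRing (MvPolynomial σ ℚ) :=
  (algebraMap _ _).comp (map (Int.castRingHom ℚ))

theorem intToFrac_injective : Function.Injective (intToFrac σ) :=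
  (IsFractionRing.injective (MvPolynomial σ ℚ) _).comp
    (map_injective (Int.castRingHom ℚ) Int.cast_injective)

theorem intToFrac_X (i : σ) : intToFrac σ (X i) = algebraMap (MvPolynomial σ ℚ) _ (X i) := by
  simp [intToFrac]

variable [Fintype σ]

abbrev LaurentRing := Localization.Away (∏ i, X i : MvPolynomial σ ℤ)

theorem prod_X_ne_zero : (∏ i, X i : MvPolynomial σ ℤ) ≠ 0 :=
  Finset.prod_ne_zero_iff.mpr fun i _ => X_ne_zero i

def laurentToFrac : LaurentRing σ →+* FractionRing (MvPolynomial σ ℚ) :=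
  IsLocalization.Away.lift _
    (((map_ne_zero_iff _ (intToFrac_injective σ)).mpr (prod_X_ne_zero σ)).isUnit)

def laurentEvalOne : LaurentRing σ →+* ℤ :=
  IsLocalization.Away.lift (∏ i, X i) (g := eval (1 : σ → ℤ)) (by rw [map_prod]; simp)

theorem laurentToFrac_injective : Function.Injective (laurentToFrac σ) :=
  IsLocalization.Away.lift_injective (prod_X_ne_zero σ) (intToFrac_injective σ) _

variable {σ}

theorem isUnit_algebraMap_X (i : σ) :
    IsUnit (algebraMap (MvPolynomial σ ℤ) (LaurentRing σ) (X i)) :=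
  (IsLocalization.Away.algebraMap_isUnit_iff _).mpr
    ⟨1, (pow_one (∏ i, X i : MvPolynomial σ ℤ)).symm ▸
      Finset.dvd_prod_of_mem _ (Finset.mem_univ i)⟩

theorem laurentToFrac_algebraMap (p : MvPolynomial σ ℤ) :
    laurentToFrac σ (algebraMap (MvPolynomial σ ℤ) _ p) = intToFrac σ p :=
  IsLocalization.Away.lift_eq _ _ p

theorem laurentEvalOne_algebraMap_X (i : σ) :
    laurentEvalOne σ (algebraMap (MvPolynomial σ ℤ) _ (X i)) = 1 := by
  simp [laurentEvalOne]

theorem exists_laurentToFrac_mul_pow_eq (y : LaurentRing σ) :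
    ∃ (m : ℕ) (P : MvPolynomial σ ℤ),
      laurentToFrac σ y * (∏ i, intToFrac σ (X i)) ^ m = intToFrac σ P := by
  obtain ⟨m, P, h⟩ := IsLocalization.Away.surj (∏ i, X i : MvPolynomial σ ℤ) y
  refine ⟨m, P, ?_⟩
  rw [← laurentToFrac_algebraMap, ← h, map_mul, map_pow, laurentToFrac_algebraMap, map_prod]

end Laurent

end RankTwoExchange

end

open RankTwoExchange in
theorem stmt_19 (c : ℕ) (hc : 2 ≤ c)
    (x : ℤ → FractionRing (MvPolynomial (Fin 2) ℚ))
    (hx1 : x 1 = algebraMap (MvPolynomial (Fin 2) ℚ) _ (X 0))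
    (hx2 : x 2 = algebraMap (MvPolynomial (Fin 2) ℚ) _ (X 1))
    (hrec : ∀ n : ℤ, x (n + 1) = (x n ^ c + 1) / x (n - 1)) :
    ∀ n : ℤ, ∃ (P : MvPolynomial (Fin 2) ℤ) (i j : ℕ),
      x n * x 1 ^ i * x 2 ^ j = MvPolynomial.aeval ![x 1, x 2] P := by
  have haeval (P : MvPolynomial (Fin 2) ℤ) : aeval ![x 1, x 2] P = intToFrac (Fin 2) P := by
    refine DFunLike.congr_fun (ringHom_ext (fun _ => by simp) fun i => ?_) P
    fin_cases i <;> simp [intToFrac_X, hx1, hx2]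
  have hmem := mem_posImage_of_exchange_int (laurentToFrac_injective (Fin 2))
    (ε := laurentEvalOne (Fin 2)) (by omega : c ≠ 0)
    (fun n hn => mul_eq_of_eq_div (hrec n) hn.symm) (isUnit_algebraMap_X 0)
    (isUnit_algebraMap_X 1) (by simp [laurentEvalOne_algebraMap_X])
    (by simp [laurentEvalOne_algebraMap_X])
    (by rw [laurentToFrac_algebraMap, intToFrac_X, hx1])
    (by rw [laurentToFrac_algebraMap, intToFrac_X, hx2])
  intro n
  obtain ⟨y, hy⟩ := posImage_subset_range (hmem n)
  obtain ⟨m, P, hP⟩ := exists_laurentToFrac_mul_pow_eq y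
  refine ⟨P, m, m, ?_⟩
  rw [mul_assoc, ← mul_pow, haeval, ← hP, hy, Fin.prod_univ_two, intToFrac_X, intToFrac_X,
    hx1, hx2]
end
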